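/- Let f : ℝ → ℝ be twice continuously differentiable with f''(u) > 0 on an interval J containing u1, u2, u3, u4, and let x1 < x2 < x4 be real numbers. Set x3 := x2 and x23 := x2 (the two middle particles share the position x2). Then there exists u23 between u2 and u3 (i.e. u23 ∈ [min(u2,u3), max(u2,u3)]) satisfying the area condition (x23 − x1)·a(u1, u23) + (x4 − x23)·a(u23, u4) = (x2 − x1)·a(u1, u2) + (x4 − x3)·a(u3, u4). -/

import Mathlib

open Set

/-- The nonlinear average of a flux function `f` between two states `u1`, `u2`,
with the convention `a(u,u) = u`. -/
noncomputable def nlAvg (f : ℝ → ℝ) (u1 u2 : ℝ) : ℝ :=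
  if u1 = u2 then u1
  else ((deriv f u2 * u2 - f u2) - (deriv f u1 * u1 - f u1)) / (deriv f u2 - deriv f u1)

lemma nlAvg_comm (f : ℝ → ℝ) (u v : ℝ) : nlAvg f u v = nlAvg f v u := by
  rcases eq_or_ne u v with rfl | h
  · rfl
  · rw [nlAvg, nlAvg, if_neg h, if_neg h.symm, ← neg_div_neg_eq]
    ring_nf

lemma nlAvg_mul (f : ℝ → ℝ) {p q : ℝ} (hD : deriv f q - deriv f p ≠ 0) :
    (deriv f q * q - f q) - (deriv f p * p - f p) = nlAvg f p q * (deriv f q - deriv f p) := by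
  have hpq : p ≠ q := by rintro rfl; exact hD (sub_self _)
  rw [nlAvg, if_neg hpq, div_mul_cancel₀ _ hD]

section

variable {f : ℝ → ℝ} {uL uU : ℝ}

lemma aux_diff (hf : ContDiff ℝ 2 f) : Differentiable ℝ f ∧ Differentiable ℝ (deriv f) := by
  have h2 : ContDiff ℝ (1 + 1) f := by norm_num; exact hf
  have := contDiff_succ_iff_deriv.mp h2
  exact ⟨this.1, this.2.2.differentiable one_ne_zero⟩

lemma deriv_sm (hf : ContDiff ℝ 2 f)
    (hconv : ∀ u ∈ Icc uL uU, 0 < deriv (deriv f) u) :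
    StrictMonoOn (deriv f) (Icc uL uU) := by
  apply strictMonoOn_of_deriv_pos (convex_Icc uL uU)
  · exact (aux_diff hf).2.continuous.continuousOn
  · intro x hx
    exact hconv x (interior_subset hx)

lemma nlAvg_mem_Ioo (hf : ContDiff ℝ 2 f)
    (hconv : ∀ u ∈ Icc uL uU, 0 < deriv (deriv f) u)
    {p q : ℝ} (hp : p ∈ Icc uL uU) (hq : q ∈ Icc uL uU) (hpq : p < q) :
    nlAvg f p q ∈ Ioo p q := by
  obtain ⟨hd1, hd2⟩ := aux_diff hf
  have sm := deriv_sm hf hconv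
  have hF : ∀ x ∈ Ioo p q, HasDerivAt (fun u => deriv f u * u - f u)
      (deriv (deriv f) x * x) x := by
    intro x _
    have h1 : HasDerivAt (fun u => deriv f u * u)
        (deriv (deriv f) x * x + deriv f x * 1) x :=
      ((hd2 x).hasDerivAt).mul (hasDerivAt_id x)
    have h2 := h1.fun_sub (hd1 x).hasDerivAt
    exact h2.congr_deriv (by ring)
  have hFc : ContinuousOn (fun u => deriv f u * u - f u) (Icc p q) :=
    ((hd2.continuous.mul continuous_id).sub hd1.continuous).continuousOn
  obtain ⟨c, hc, heq⟩ := exists_ratio_hasDerivAt_eq_ratio_slope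
    (fun u => deriv f u * u - f u) (fun x => deriv (deriv f) x * x) hpq hFc hF
    (deriv f) (deriv (deriv f)) hd2.continuous.continuousOn
    (fun x _ => (hd2 x).hasDerivAt)
  have hcI : c ∈ Icc uL uU := ⟨le_trans hp.1 hc.1.le, le_trans hc.2.le hq.2⟩
  have hk : deriv (deriv f) c ≠ 0 := (hconv c hcI).ne'
  have hD : (0:ℝ) < deriv f q - deriv f p := sub_pos.mpr (sm hp hq hpq)
  have hN : (deriv f q * q - f q) - (deriv f p * p - f p)
      = (deriv f q - deriv f p) * c := by
    apply mul_right_cancel₀ hk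
    linear_combination -heq
  have : nlAvg f p q = c := by
    rw [nlAvg, if_neg hpq.ne, hN, mul_comm, mul_div_assoc, div_self hD.ne', mul_one]
  rw [this]
  exact hc

lemma nlAvg_mem_Icc (hf : ContDiff ℝ 2 f)
    (hconv : ∀ u ∈ Icc uL uU, 0 < deriv (deriv f) u)
    {p q : ℝ} (hp : p ∈ Icc uL uU) (hq : q ∈ Icc uL uU) :
    nlAvg f p q ∈ Icc (min p q) (max p q) := by
  rcases lt_trichotomy p q with h | rfl | h
  · rw [min_eq_left h.le, max_eq_right h.le]
    exact Ioo_subset_Icc_self (nlAvg_mem_Ioo hf hconv hp hq h)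
  · simp [nlAvg]
  · rw [min_eq_right h.le, max_eq_left h.le, nlAvg_comm]
    exact Ioo_subset_Icc_self (nlAvg_mem_Ioo hf hconv hq hp h)

lemma nlAvg_mono (hf : ContDiff ℝ 2 f)
    (hconv : ∀ u ∈ Icc uL uU, 0 < deriv (deriv f) u)
    {p u u' : ℝ} (hp : p ∈ Icc uL uU) (hu : u ∈ Icc uL uU) (hu' : u' ∈ Icc uL uU)
    (h : u ≤ u') : nlAvg f p u ≤ nlAvg f p u' := by
  rcases h.lt_or_eq with h | rfl
  · have sm := deriv_sm hf hconv
    rcases lt_trichotomy p u with hpu | rfl | hup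
    · -- p < u < u'
      have hD1 : (0:ℝ) < deriv f u - deriv f p := sub_pos.mpr (sm hp hu hpu)
      have hD2 : (0:ℝ) < deriv f u' - deriv f u := sub_pos.mpr (sm hu hu' h)
      have e1 := nlAvg_mul f hD1.ne'
      have e2 := nlAvg_mul f hD2.ne'
      have hD3 : (0:ℝ) < deriv f u' - deriv f p := sub_pos.mpr (sm hp hu' (hpu.trans h))
      have e3 := nlAvg_mul f hD3.ne'
      have key : nlAvg f p u' * (deriv f u' - deriv f p)
          = nlAvg f p u * (deriv f u - deriv f p)
            + nlAvg f u u' * (deriv f u' - deriv f u) := by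
        linear_combination e1 + e2 - e3
      have b1 := (nlAvg_mem_Ioo hf hconv hp hu hpu).2.le
      have b2 := (nlAvg_mem_Ioo hf hconv hu hu' h).1.le
      nlinarith [mul_nonneg (sub_nonneg.mpr (b1.trans b2)) hD2.le]
    · -- p = u
      have := (nlAvg_mem_Ioo hf hconv hp hu' h).1.le
      simpa [nlAvg] using this
    · rcases lt_trichotomy p u' with hpu' | rfl | hu'p
      · -- u < p < u'
        have h1 := (nlAvg_mem_Ioo hf hconv hu hp hup).2.le
        have h2 := (nlAvg_mem_Ioo hf hconv hp hu' hpu').1.le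
        rw [nlAvg_comm f p u]
        exact h1.trans h2
      · -- u < p = u'
        have h1 := (nlAvg_mem_Ioo hf hconv hu hp hup).2.le
        rw [nlAvg_comm] at h1
        simpa [nlAvg] using h1
      · -- u < u' < p
        have hD1 : (0:ℝ) < deriv f u' - deriv f u := sub_pos.mpr (sm hu hu' h)
        have hD2 : (0:ℝ) < deriv f p - deriv f u' := sub_pos.mpr (sm hu' hp hu'p)
        have hD3 : (0:ℝ) < deriv f p - deriv f u := sub_pos.mpr (sm hu hp hup)
        have e1 := nlAvg_mul f hD1.ne'
        have e2 := nlAvg_mul f hD2.ne'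
        have e3 := nlAvg_mul f hD3.ne'
        have key : nlAvg f u p * (deriv f p - deriv f u)
            = nlAvg f u u' * (deriv f u' - deriv f u)
              + nlAvg f u' p * (deriv f p - deriv f u') := by
          linear_combination e1 + e2 - e3
        have b1 := (nlAvg_mem_Ioo hf hconv hu hu' h).2.le
        have b2 := (nlAvg_mem_Ioo hf hconv hu' hp hu'p).1.le
        rw [nlAvg_comm f p u, nlAvg_comm f p u']
        nlinarith [mul_nonneg (sub_nonneg.mpr (b1.trans b2)) hD1.le]
  · exact le_rfl

lemma nlAvg_contOn (hf : ContDiff ℝ 2 f)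
    (hconv : ∀ u ∈ Icc uL uU, 0 < deriv (deriv f) u)
    {p : ℝ} (hp : p ∈ Icc uL uU) :
    ContinuousOn (fun u => nlAvg f p u) (Icc uL uU) := by
  obtain ⟨hd1, hd2⟩ := aux_diff hf
  have sm := deriv_sm hf hconv
  intro q hq
  rcases eq_or_ne q p with rfl | hqp
  · have hval : nlAvg f q q = q := by simp [nlAvg]
    rw [ContinuousWithinAt, hval, Metric.tendsto_nhdsWithin_nhds]
    intro ε hε
    refine ⟨ε, hε, fun {u} hu hd => ?_⟩
    have hm := nlAvg_mem_Icc hf hconv hq hu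
    rw [Real.dist_eq] at hd ⊢
    rw [abs_sub_lt_iff] at hd ⊢
    rcases le_total q u with hle | hle
    · rw [min_eq_left hle, max_eq_right hle] at hm
      exact ⟨by linarith [hm.2], by linarith [hm.1]⟩
    · rw [min_eq_right hle, max_eq_left hle] at hm
      exact ⟨by linarith [hm.2], by linarith [hm.1]⟩
  · have hDne : deriv f q - deriv f p ≠ 0 :=
      sub_ne_zero.mpr (fun hd => hqp (sm.injOn hq hp hd))
    have hcont : ContinuousWithinAt
        (fun u => ((deriv f u * u - f u) - (deriv f p * p - f p)) /
          (deriv f u - deriv f p)) (Icc uL uU) q := by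
      apply ContinuousWithinAt.div
      · exact (((hd2.continuous.mul continuous_id).sub hd1.continuous).sub
          continuous_const).continuousWithinAt
      · exact (hd2.continuous.sub continuous_const).continuousWithinAt
      · exact hDne
    apply hcont.congr_of_eventuallyEq
    · filter_upwards [(eventually_ne_nhds hqp).filter_mono nhdsWithin_le_nhds] with u hu
      rw [nlAvg, if_neg (Ne.symm hu)]
    · rw [nlAvg, if_neg (Ne.symm hqp)]

end

/-- Existence of the merged value: when the two middle particles share the position
`x2 = x3 = x23`, there is a value `u23` between `u2` and `u3` satisfying the
area condition for the merge. -/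
theorem merge_value_exists (f : ℝ → ℝ) (hf : ContDiff ℝ 2 f) (uL uU : ℝ)
    (hconv : ∀ u ∈ Icc uL uU, 0 < deriv (deriv f) u)
    (u1 u2 u3 u4 : ℝ) (hu1 : u1 ∈ Icc uL uU) (hu2 : u2 ∈ Icc uL uU)
    (hu3 : u3 ∈ Icc uL uU) (hu4 : u4 ∈ Icc uL uU)
    (x1 x2 x4 : ℝ) (h12 : x1 < x2) (h24 : x2 < x4) :
    ∃ u23 ∈ Icc (min u2 u3) (max u2 u3),
      (x2 - x1) * nlAvg f u1 u23 + (x4 - x2) * nlAvg f u23 u4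
        = (x2 - x1) * nlAvg f u1 u2 + (x4 - x2) * nlAvg f u3 u4 := by
  have hsub : uIcc u2 u3 ⊆ Icc uL uU := uIcc_subset_Icc hu2 hu3
  set g : ℝ → ℝ := fun u => (x2 - x1) * nlAvg f u1 u + (x4 - x2) * nlAvg f u u4 with hg
  have hgc : ContinuousOn g (uIcc u2 u3) := by
    apply ContinuousOn.add
    · exact continuousOn_const.mul ((nlAvg_contOn hf hconv hu1).mono hsub)
    · exact continuousOn_const.mul
        (((nlAvg_contOn hf hconv hu4).mono hsub).congr (fun u _ => nlAvg_comm f u u4))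
  have key : (x2 - x1) * nlAvg f u1 u2 + (x4 - x2) * nlAvg f u3 u4
      ∈ uIcc (g u2) (g u3) := by
    rcases le_total u2 u3 with h | h
    · have m1 : nlAvg f u1 u2 ≤ nlAvg f u1 u3 := nlAvg_mono hf hconv hu1 hu2 hu3 h
      have m2 : nlAvg f u2 u4 ≤ nlAvg f u3 u4 := by
        rw [nlAvg_comm f u2 u4, nlAvg_comm f u3 u4]
        exact nlAvg_mono hf hconv hu4 hu2 hu3 h
      rw [mem_uIcc]
      left
      constructor
      · simp only [hg]
        nlinarith [mul_nonneg (sub_pos.mpr h24).le (sub_nonneg.mpr m2)]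
      · simp only [hg]
        nlinarith [mul_nonneg (sub_pos.mpr h12).le (sub_nonneg.mpr m1)]
    · have m1 : nlAvg f u1 u3 ≤ nlAvg f u1 u2 := nlAvg_mono hf hconv hu1 hu3 hu2 h
      have m2 : nlAvg f u3 u4 ≤ nlAvg f u2 u4 := by
        rw [nlAvg_comm f u2 u4, nlAvg_comm f u3 u4]
        exact nlAvg_mono hf hconv hu4 hu3 hu2 h
      rw [mem_uIcc]
      right
      constructor
      · simp only [hg]
        nlinarith [mul_nonneg (sub_pos.mpr h12).le (sub_nonneg.mpr m1)]
      · simp only [hg]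
        nlinarith [mul_nonneg (sub_pos.mpr h24).le (sub_nonneg.mpr m2)]
  obtain ⟨u23, hmem, hval⟩ := intermediate_value_uIcc hgc key
  refine ⟨u23, ?_, hval⟩
  simpa [Set.uIcc] using hmem
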